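/- arXiv:2604.19583 — 4 statements merged into one kernel-verified Lean document; each statement's English description precedes it below -/
import Mathlib

section
/- For any ξ, η ∈ ℝ and u, v ∈ 𝔻, sup_{z∈𝔻} |f_{ξ,u}(z) − f_{η,v}(z)| = sup_{θ∈ℝ} |1 − λ · (1 − r·e^{iθ})/(1 − r·e^{−iθ})|, where f_{ξ,u}(z) = e^{iξ}(z−u)/(1−ū·z), λ = e^{i(η−ξ)}·(1−ū·v)/(1−u·v̄), and r = ρ(u,v) = |(u−v)/(1−ū·v)|. -/
open Complex

noncomputable section

def unitDisk : Set ℂ := {z : ℂ | ‖z‖ < 1}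

noncomputable def autMap (ξ : ℝ) (u z : ℂ) : ℂ :=
  Complex.exp (Complex.I * ξ) * ((z - u) / (1 - (starRingEnd ℂ) u * z))

noncomputable def pseudoHyp (u v : ℂ) : ℝ :=
  ‖(u - v) / (1 - (starRingEnd ℂ) u * v)‖

/-!
By the maximum modulus principle the supremum over the disc equals the supremum over the unit
circle. With `φ_u z = (z - u) / (1 - ū z)` and `a = φ_u v`, the composition rule
`φ_v = (1 - ū v) / (1 - u v̄) · φ_a ∘ φ_u` and `|φ_u z| = 1` on the circle give, for
`w = φ_u z`,
`|autMap ξ u z - autMap η v z| = |1 - λ φ_a(w) / w| = |1 - λ (1 - a w̄) / (1 - ā w)|`.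
As `z` runs over the unit circle so does `w`, hence `a w̄` runs over the circle of radius
`|a| = ρ(u, v)`.
-/

open ComplexConjugate Metric Set

section MaximumModulus

variable {E F : Type*} [NormedAddCommGroup E] [NormedSpace ℂ E] [ProperSpace E] [Nontrivial E]
  [NormedAddCommGroup F] [NormedSpace ℂ F]

theorem DiffContOnCl.iSup_norm_eq_iSup_frontier_norm {f : E → F} {U : Set E}
    (hf : DiffContOnCl ℂ f U) (hU : Bornology.IsBounded U) :
    ⨆ z : U, ‖f z‖ = ⨆ z : frontier U, ‖f z‖ := by
  have bdd_of_subset {s : Set E} (hs : s ⊆ closure U) :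
      BddAbove (range fun z : s => ‖f z‖) := by
    refine (hU.isCompact_closure.bddAbove_image hf.continuousOn.norm).mono ?_
    rintro _ ⟨z, rfl⟩
    exact mem_image_of_mem _ (hs z.2)
  apply le_antisymm
  · refine Real.iSup_le (fun z => ?_) (Real.iSup_nonneg fun _ => norm_nonneg _)
    exact Complex.norm_le_of_forall_mem_frontier_norm_le hU hf
      (fun w hw => le_ciSup (bdd_of_subset frontier_subset_closure) ⟨w, hw⟩)
      (subset_closure z.2)
  · refine Real.iSup_le (fun w => ?_) (Real.iSup_nonneg fun _ => norm_nonneg _)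
    have hw : (w : E) ∈ closure U := frontier_subset_closure w.2
    exact ContinuousWithinAt.closure_le hw ((hf.continuousOn.norm _ hw).mono subset_closure)
      continuousWithinAt_const fun z hz => le_ciSup (bdd_of_subset subset_closure) ⟨z, hz⟩

end MaximumModulus

def mobius (u z : ℂ) : ℂ := (z - u) / (1 - conj u * z)

section Mobius

variable {u v z w : ℂ}

lemma one_sub_conj_mul_ne_zero (hu : ‖u‖ < 1) (hz : ‖z‖ ≤ 1) : 1 - conj u * z ≠ 0 := by
  refine sub_ne_zero.mpr fun h => ?_
  have := congrArg norm h
  rw [norm_one, norm_mul, RCLike.norm_conj] at this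
  nlinarith [norm_nonneg u]

lemma norm_mobius_of_norm_eq_one (hu : ‖u‖ < 1) (hz : ‖z‖ = 1) : ‖mobius u z‖ = 1 := by
  have hzu : z - u ≠ 0 := sub_ne_zero.mpr fun h => by rw [h] at hz; linarith
  have hden : 1 - conj u * z = z * conj (z - u) := by
    rw [map_sub, mul_sub, mul_conj', hz]; push_cast; ring
  rw [mobius, norm_div, hden, norm_mul, hz, RCLike.norm_conj, one_mul,
    div_self (norm_ne_zero_iff.mpr hzu)]

lemma mobius_neg_mobius (hu : ‖u‖ < 1) (hz : 1 - conj u * z ≠ 0) :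
    mobius (-u) (mobius u z) = z := by
  have huu := one_sub_conj_mul_ne_zero hu hu.le
  rw [mobius, mobius, map_neg, sub_neg_eq_add, neg_mul, sub_neg_eq_add, div_add' _ _ _ hz,
    mul_div_assoc', one_add_div hz, div_div_div_cancel_right₀ hz,
    div_eq_iff (by convert huu using 1; ring)]
  ring

lemma image_mobius_sphere (hu : ‖u‖ < 1) : mobius u '' sphere 0 1 = sphere 0 1 := by
  have hu' : ‖-u‖ < 1 := by rwa [norm_neg]
  refine Subset.antisymm ?_ fun w hw => ⟨mobius (-u) w, ?_, ?_⟩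
  · rintro _ ⟨z, hz, rfl⟩
    exact mem_sphere_zero_iff_norm.mpr
      (norm_mobius_of_norm_eq_one hu (mem_sphere_zero_iff_norm.mp hz))
  · exact mem_sphere_zero_iff_norm.mpr
      (norm_mobius_of_norm_eq_one hu' (mem_sphere_zero_iff_norm.mp hw))
  · simpa using mobius_neg_mobius hu'
      (one_sub_conj_mul_ne_zero hu' (mem_sphere_zero_iff_norm.mp hw).le)

lemma mobius_eq_mul_mobius_mobius (hu : ‖u‖ < 1) (hv : ‖v‖ < 1) (hz : ‖z‖ ≤ 1) :
    mobius v z = (1 - conj u * v) / (1 - u * conj v) * mobius (mobius u v) (mobius u z) := by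
  have huu := one_sub_conj_mul_ne_zero hu hu.le
  have huv := one_sub_conj_mul_ne_zero hu hv.le
  have hvu : 1 - u * conj v ≠ 0 := by rw [mul_comm]; exact one_sub_conj_mul_ne_zero hv hu.le
  have huz := one_sub_conj_mul_ne_zero hu hz
  have hvz := one_sub_conj_mul_ne_zero hv hz
  have hsub : mobius u z - mobius u v
      = (1 - conj u * u) * (z - v) / ((1 - conj u * z) * (1 - conj u * v)) := by
    rw [mobius, mobius, div_sub_div _ _ huz huv]; ring
  have hden : 1 - conj (mobius u v) * mobius u z
      = (1 - conj u * u) * (1 - conj v * z) / ((1 - u * conj v) * (1 - conj u * z)) := by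
    rw [mobius, mobius, map_div₀, map_sub, map_sub, map_one, map_mul, conj_conj,
      div_mul_div_comm, one_sub_div (mul_ne_zero hvu huz)]
    ring
  unfold mobius at hsub hden ⊢
  rw [hsub, hden]
  rw [mul_comm] at huz huv hvu hvz
  field_simp

lemma norm_mobius_eq_pseudoHyp : ‖mobius u v‖ = pseudoHyp u v := by
  rw [mobius, pseudoHyp, norm_div, norm_div, norm_sub_rev]

lemma mobius_div_of_norm_eq_one (a : ℂ) (hw : ‖w‖ = 1) :
    mobius a w / w = (1 - a * conj w) / (1 - conj (a * conj w)) := by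
  have hw0 : w ≠ 0 := norm_ne_zero_iff.mp (by rw [hw]; exact one_ne_zero)
  have hww : w * conj w = 1 := by rw [mul_conj', hw]; norm_num
  have hnum : w - a = w * (1 - a * conj w) := by linear_combination a * hww
  rw [mobius, hnum, map_mul, conj_conj, mul_comm (conj a) w, div_div, mul_comm _ w,
    mul_div_mul_left _ _ hw0]

lemma image_mul_conj_mobius_sphere (a : ℂ) (hu : ‖u‖ < 1) :
    (fun z => a * conj (mobius u z)) '' sphere 0 1 = sphere 0 ‖a‖ := by
  have hconj : conj '' sphere (0 : ℂ) 1 = sphere 0 1 := by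
    ext w
    exact ⟨by rintro ⟨z, hz, rfl⟩; simpa using hz,
      fun hw => ⟨conj w, by simpa using hw, conj_conj w⟩⟩
  calc (fun z => a * conj (mobius u z)) '' sphere 0 1
      = (a • ·) '' (conj '' (mobius u '' sphere 0 1)) := by
        simp only [image_image, smul_eq_mul]
    _ = sphere 0 ‖a‖ := by
      rw [image_mobius_sphere hu, hconj, image_smul, smul_sphere a 0 zero_le_one, smul_zero,
        mul_one]

lemma differentiableOn_mobius (hu : ‖u‖ < 1) :
    DifferentiableOn ℂ (mobius u) (closedBall 0 1) :=
  fun _ hz => ((differentiableAt_id.sub_const u).div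
    ((differentiableAt_const 1).sub (differentiableAt_id.const_mul _))
    (one_sub_conj_mul_ne_zero hu (mem_closedBall_zero_iff.mp hz))).differentiableWithinAt

end Mobius

lemma autMap_eq_mul_mobius (ξ : ℝ) (u z : ℂ) : autMap ξ u z = exp (I * ξ) * mobius u z := rfl

lemma norm_autMap_sub_autMap_of_norm_eq_one (ξ η : ℝ) {u v z : ℂ} (hu : ‖u‖ < 1)
    (hv : ‖v‖ < 1) (hz : ‖z‖ = 1) :
    ‖autMap ξ u z - autMap η v z‖
      = ‖1 - exp (I * (η - ξ)) * ((1 - conj u * v) / (1 - u * conj v))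
          * ((1 - mobius u v * conj (mobius u z))
            / (1 - conj (mobius u v * conj (mobius u z))))‖ := by
  have hw := norm_mobius_of_norm_eq_one hu hz
  have hw0 : mobius u z ≠ 0 := norm_ne_zero_iff.mp (by rw [hw]; exact one_ne_zero)
  have hexp : exp (I * η) = exp (I * ξ) * exp (I * (η - ξ)) := by rw [← exp_add]; ring_nf
  have hdiff : autMap ξ u z - autMap η v z = exp (I * ξ) * mobius u z
      * (1 - exp (I * (η - ξ)) * ((1 - conj u * v) / (1 - u * conj v))
        * (mobius (mobius u v) (mobius u z) / mobius u z)) := by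
    rw [autMap_eq_mul_mobius, autMap_eq_mul_mobius, mobius_eq_mul_mobius_mobius hu hv hz.le,
      hexp]
    field_simp
  rw [hdiff, norm_mul, norm_mul, norm_exp_I_mul_ofReal, hw, one_mul, one_mul,
    mobius_div_of_norm_eq_one _ hw]

lemma sphere_zero_eq_range_ofReal_mul_exp {r : ℝ} (hr : 0 ≤ r) :
    sphere (0 : ℂ) r = range fun θ : ℝ => (r : ℂ) * exp (I * θ) := by
  rw [← abs_of_nonneg hr, ← range_circleMap, abs_of_nonneg hr]
  congr with θ
  rw [circleMap, zero_add, mul_comm I]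

lemma conj_ofReal_mul_exp_I_mul (r θ : ℝ) :
    conj ((r : ℂ) * exp (I * θ)) = r * exp (-(I * θ)) := by
  rw [map_mul, conj_ofReal, ← exp_conj, map_mul, conj_I, conj_ofReal, neg_mul]

theorem sup_dist_eq_sup_over_circle
    (ξ η : ℝ) (u v : ℂ) (hu : u ∈ unitDisk) (hv : v ∈ unitDisk) :
    (⨆ z : unitDisk, ‖autMap ξ u z - autMap η v z‖)
      = ⨆ θ : ℝ, ‖
          (1 - (Complex.exp (Complex.I * (η - ξ))
                  * ((1 - (starRingEnd ℂ) u * v) / (1 - u * (starRingEnd ℂ) v)))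
              * ((1 - (pseudoHyp u v : ℂ) * Complex.exp (Complex.I * θ))
                  / (1 - (pseudoHyp u v : ℂ) * Complex.exp (-(Complex.I * θ)))))‖ := by
  have hu' : ‖u‖ < 1 := hu
  have hv' : ‖v‖ < 1 := hv
  have hdisk : unitDisk = ball 0 1 := by ext; simp [unitDisk]
  have hF : DiffContOnCl ℂ (fun z => autMap ξ u z - autMap η v z) (ball 0 1) := by
    refine DifferentiableOn.diffContOnCl ?_
    rw [closure_ball 0 one_ne_zero]
    exact ((differentiableOn_mobius hu').const_mul _).sub
      ((differentiableOn_mobius hv').const_mul _)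
  rw [hdisk, hF.iSup_norm_eq_iSup_frontier_norm isBounded_ball, frontier_ball 0 one_ne_zero]
  set G : ℂ → ℝ := fun ζ =>
    ‖1 - exp (I * (η - ξ)) * ((1 - conj u * v) / (1 - u * conj v)) * ((1 - ζ) / (1 - conj ζ))‖
  refine congrArg sSup ?_
  calc range (fun z : sphere (0 : ℂ) 1 => ‖autMap ξ u z - autMap η v z‖)
      = G '' ((fun z => mobius u v * conj (mobius u z)) '' sphere 0 1) := by
        rw [image_image, image_eq_range]
        congr with z
        exact norm_autMap_sub_autMap_of_norm_eq_one ξ η hu' hv'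
          (mem_sphere_zero_iff_norm.mp z.2)
    _ = G '' range fun θ : ℝ => (pseudoHyp u v : ℂ) * exp (I * θ) := by
        rw [image_mul_conj_mobius_sphere _ hu',
          sphere_zero_eq_range_ofReal_mul_exp (norm_nonneg _), norm_mobius_eq_pseudoHyp]
    _ = _ := by
        rw [← range_comp]
        refine congrArg range (funext fun θ => ?_)
        simp only [G, Function.comp_apply, conj_ofReal_mul_exp_I_mul]
end
end

section
/- Let 0 ≤ r < 1. Then the set of values of arg((1 − r·e^{iθ})/(1 − r·e^{−iθ})) as θ ranges over ℝ is exactly the closed interval [−δ, δ], where δ ∈ [0, π/2] satisfies sin δ = 2r√(1−r²) and cos δ = 1 − 2r². -/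
/-! With `z = 1 - r e^{iθ}` the quotient is `z / z̄`, a unit complex number whose real part
`Re (z²) / |z|²` is at least `1 - 2r² = cos δ`, because `z` lies on the circle `|z - 1| = r`;
hence its argument lies in `[-δ, δ]`. At `θ = ± arccos r`, where the ray from `0` through `z` is
tangent to that circle, the quotient is `e^{∓iδ}`. The argument depends continuously on `θ`,
since the quotient never reaches the negative real axis, so the intermediate value theorem
fills in `[-δ, δ]`. -/

open Complex Real ComplexConjugate

noncomputable section

namespace Complex

theorem mem_slitPlane_of_abs_arg_lt {u : ℂ} (hu : u ≠ 0) (h : |arg u| < π) : u ∈ slitPlane :=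
  mem_slitPlane_iff_arg.2 ⟨((le_abs_self _).trans_lt h).ne, hu⟩

theorem norm_div_conj_self {z : ℂ} (hz : z ≠ 0) : ‖z / conj z‖ = 1 := by
  rw [norm_div, norm_conj, div_self (norm_ne_zero_iff.mpr hz)]

theorem div_conj_self_eq (z : ℂ) : z / conj z = z ^ 2 / (normSq z : ℂ) := by
  rcases eq_or_ne z 0 with rfl | hz
  · simp
  · rw [← mul_conj, sq, mul_div_mul_left _ _ hz]

theorem re_div_conj_self (z : ℂ) : (z / conj z).re = (z ^ 2).re / normSq z := by
  rw [div_conj_self_eq, div_ofReal_re]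

theorem one_sub_two_mul_sq_mul_normSq_le_re_sq {z : ℂ} {r : ℝ} (h : ‖z - 1‖ ≤ r) :
    (1 - 2 * r ^ 2) * normSq z ≤ (z ^ 2).re := by
  have hdisc : (z.re - 1) ^ 2 + z.im ^ 2 ≤ r ^ 2 := by
    have := pow_le_pow_left₀ (norm_nonneg _) h 2
    rwa [← normSq_eq_norm_sq, normSq_apply, sub_re, sub_im, one_re, one_im, sub_zero,
      ← sq, ← sq] at this
  rw [normSq_apply, sq z, mul_re, ← sq, ← sq]
  rcases le_total (r ^ 2) 1 with hr1 | hr1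
  -- for `z = x + iy`: `r²x² - (1 - r²)y² ≥ r²x² - (1 - r²)(r² - (x - 1)²) = (x - (1 - r²))²`
  · nlinarith [sq_nonneg (z.re - (1 - r ^ 2))]
  · nlinarith [sq_nonneg z.re, sq_nonneg z.im]

theorem one_sub_two_mul_sq_le_re_div_conj {z : ℂ} {r : ℝ} (hz : z ≠ 0) (h : ‖z - 1‖ ≤ r) :
    1 - 2 * r ^ 2 ≤ (z / conj z).re := by
  rw [re_div_conj_self, le_div_iff₀ (normSq_pos.2 hz)]
  exact one_sub_two_mul_sq_mul_normSq_le_re_sq h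

theorem abs_arg_le_of_cos_le_re {u : ℂ} {δ : ℝ} (hu : ‖u‖ = 1) (hδ0 : 0 ≤ δ) (hδπ : δ ≤ π)
    (h : Real.cos δ ≤ u.re) : |arg u| ≤ δ := by
  have hu0 : u ≠ 0 := norm_ne_zero_iff.mp (by rw [hu]; exact one_ne_zero)
  calc |arg u| = arccos (Real.cos |arg u|) := (arccos_cos (abs_nonneg _) (abs_arg_le_pi u)).symm
    _ = arccos u.re := by rw [Real.cos_abs, cos_arg hu0, hu, div_one]
    _ ≤ arccos (Real.cos δ) := arccos_le_arccos h
    _ = δ := arccos_cos hδ0 hδπ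

theorem abs_arg_div_conj_le {z : ℂ} {r δ : ℝ} (hz : z ≠ 0) (h : ‖z - 1‖ ≤ r) (hδ0 : 0 ≤ δ)
    (hδπ : δ ≤ π) (hcos : Real.cos δ = 1 - 2 * r ^ 2) : |arg (z / conj z)| ≤ δ :=
  abs_arg_le_of_cos_le_re (norm_div_conj_self hz) hδ0 hδπ
    (hcos ▸ one_sub_two_mul_sq_le_re_div_conj hz h)

theorem one_sub_mul_exp_neg_eq_conj (r θ : ℝ) :
    1 - r * exp (-(I * θ)) = conj (1 - r * exp (I * θ)) := by
  rw [map_sub, map_one, map_mul, conj_ofReal, ← exp_conj, map_mul, conj_I, conj_ofReal, neg_mul]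

theorem norm_one_sub_mul_exp_sub_one (r θ : ℝ) : ‖(1 - r * exp (I * θ)) - 1‖ = |r| := by
  rw [sub_sub_cancel_left, norm_neg, norm_mul, norm_real, Real.norm_eq_abs, mul_comm I,
    norm_exp_ofReal_mul_I, mul_one]

theorem one_sub_mul_exp_ne_zero {r : ℝ} (hr : |r| < 1) (θ : ℝ) : 1 - r * exp (I * θ) ≠ 0 := by
  intro h
  have := norm_one_sub_mul_exp_sub_one r θ
  rw [h, zero_sub, norm_neg, norm_one] at this
  exact hr.ne' this

theorem div_conj_one_sub_mul_exp_of_cos_eq {r θ : ℝ} (hcos : Real.cos θ = r)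
    (hsin : Real.sin θ ≠ 0) :
    (1 - r * exp (I * θ)) / conj (1 - r * exp (I * θ))
      = (1 - 2 * r ^ 2 : ℝ) - (2 * r * Real.sin θ : ℝ) * I := by
  set s := Real.sin θ
  have hpyth : (s : ℂ) ^ 2 + r ^ 2 = 1 := by
    exact_mod_cast hcos ▸ Real.sin_sq_add_cos_sq θ
  have hz : 1 - r * exp (I * θ) = s * (s - r * I) := by
    rw [mul_comm I, exp_mul_I, ← ofReal_cos, ← ofReal_sin, hcos]
    linear_combination -hpyth
  have hne : (s : ℂ) * (s + r * I) ≠ 0 := by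
    refine mul_ne_zero (ofReal_ne_zero.2 hsin) fun h => hsin ?_
    simpa using congrArg re h
  rw [hz, map_mul, conj_ofReal, map_sub, conj_ofReal, map_mul, conj_ofReal, conj_I, mul_neg,
    sub_neg_eq_add, div_eq_iff hne]
  push_cast
  linear_combination (2 * s * r * I) * hpyth + 2 * s ^ 2 * r ^ 2 * I_sq

theorem arg_div_conj_one_sub_mul_exp_of_cos_eq {r θ δ : ℝ} (hcos : Real.cos θ = r)
    (hsin : Real.sin θ ≠ 0) (hδ : δ ∈ Set.Ioc (-π) π) (hcosδ : Real.cos δ = 1 - 2 * r ^ 2)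
    (hsinδ : Real.sin δ = -(2 * r * Real.sin θ)) :
    arg ((1 - r * exp (I * θ)) / conj (1 - r * exp (I * θ))) = δ := by
  rw [div_conj_one_sub_mul_exp_of_cos_eq hcos hsin]
  convert arg_cos_add_sin_mul_I hδ using 2
  push_cast [← ofReal_cos, ← ofReal_sin, hcosδ, hsinδ]
  ring

end Complex

theorem Continuous.arg {X : Type*} [TopologicalSpace X] {f : X → ℂ} (hf : Continuous f)
    (h : ∀ x, f x ∈ slitPlane) : Continuous fun x => arg (f x) :=
  continuous_iff_continuousAt.2 fun x => (continuousAt_arg (h x)).comp hf.continuousAt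

theorem arg_range_eq_Icc (r δ : ℝ) (hr0 : 0 ≤ r) (hr1 : r < 1)
    (hδ : δ ∈ Set.Icc 0 (Real.pi / 2))
    (hsin : Real.sin δ = 2 * r * Real.sqrt (1 - r ^ 2))
    (hcos : Real.cos δ = 1 - 2 * r ^ 2) :
    (Set.range fun θ : ℝ => Complex.arg
        ((1 - (r : ℂ) * Complex.exp (Complex.I * θ))
          / (1 - (r : ℂ) * Complex.exp (-(Complex.I * θ)))))
      = Set.Icc (-δ) δ := by
  obtain ⟨hδ0, hδπ⟩ := hδ
  have hδ : δ < π := by linarith [pi_pos]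
  set z : ℝ → ℂ := fun θ => 1 - r * exp (I * θ)
  have hz : ∀ θ, z θ ≠ 0 := one_sub_mul_exp_ne_zero (abs_lt.2 ⟨by linarith, hr1⟩)
  simp_rw [one_sub_mul_exp_neg_eq_conj]
  change Set.range (fun θ => arg (z θ / conj (z θ))) = _
  have hbound (θ : ℝ) : |arg (z θ / conj (z θ))| ≤ δ :=
    abs_arg_div_conj_le (hz θ) ((norm_one_sub_mul_exp_sub_one r θ).trans (abs_of_nonneg hr0)).le
      hδ0 hδ.le hcos
  have hcont : Continuous fun θ => arg (z θ / conj (z θ)) := by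
    have hzc : Continuous z := by fun_prop
    refine (hzc.div (continuous_conj.comp hzc) fun θ => (map_ne_zero _).2 (hz θ)).arg fun θ => ?_
    exact mem_slitPlane_of_abs_arg_lt (div_ne_zero (hz θ) ((map_ne_zero _).2 (hz θ)))
      ((hbound θ).trans_lt hδ)
  have hs : Real.sin (arccos r) ≠ 0 := by
    rw [sin_arccos]
    exact (Real.sqrt_pos.2 (by nlinarith)).ne'
  have hcos₀ : Real.cos (arccos r) = r := cos_arccos (by linarith) hr1.le
  have hleft : arg (z (arccos r) / conj (z (arccos r))) = -δ :=
    arg_div_conj_one_sub_mul_exp_of_cos_eq hcos₀ hs ⟨by linarith, by linarith⟩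
      (by rwa [Real.cos_neg]) (by rw [Real.sin_neg, hsin, sin_arccos])
  have hright : arg (z (-arccos r) / conj (z (-arccos r))) = δ :=
    arg_div_conj_one_sub_mul_exp_of_cos_eq (by rwa [Real.cos_neg])
      (by rwa [Real.sin_neg, neg_ne_zero]) ⟨by linarith, hδ.le⟩ hcos
      (by rw [hsin, Real.sin_neg, sin_arccos]; ring)
  refine subset_antisymm (Set.range_subset_iff.2 fun θ => abs_le.1 (hbound θ)) ?_
  rw [← hleft, ← hright]
  exact (intermediate_value_Icc' (by linarith [arccos_nonneg r]) hcont.continuousOn).trans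
    (Set.image_subset_range _ _)
end
end

section
/- Let 0 ≤ r < 1 and let λ ∈ ℂ with |λ| = 1. If |λ + 1| ≤ 2r, then sup_{θ∈ℝ} |1 − λ·(1 − r·e^{iθ})/(1 − r·e^{−iθ})| = 2. -/
/-!
The quotient `(1 - r z) / (1 - r z̄)` is `w̄ / w` for `w = 1 - r z̄`, so it has modulus one and
every value is at most `2`. The value `2` is attained when `λ (1 - r z) = -(1 - r z̄)`. Writing
`λ = a²` with `|a| = 1` and `z = v ā`, this equation reduces to `r · Re v = Re a`, and
`|λ + 1| = 2 |Re a| ≤ 2r` is exactly what makes a unit `v` with that real part exist.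
-/

open Complex ComplexConjugate

lemma exp_neg_I_mul_ofReal (θ : ℝ) : exp (-(I * θ)) = conj (exp (I * θ)) := by
  rw [← exp_conj]
  simp

lemma conj_one_sub_ofReal_mul_conj (r : ℝ) (z : ℂ) : conj (1 - r * conj z) = 1 - r * z := by
  simp

lemma one_sub_ofReal_mul_ne_zero {r : ℝ} (hr : |r| < 1) {z : ℂ} (hz : ‖z‖ = 1) :
    1 - r * z ≠ 0 := by
  intro h
  have : ‖(r : ℂ) * z‖ = 1 := by rw [← sub_eq_zero.mp h, norm_one]
  rw [norm_mul, hz, mul_one, norm_real, Real.norm_eq_abs] at this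
  exact hr.ne this

lemma norm_one_sub_mul_conj_div_self_le_two {l : ℂ} (hl : ‖l‖ = 1) (w : ℂ) :
    ‖1 - l * (conj w / w)‖ ≤ 2 := by
  calc ‖1 - l * (conj w / w)‖ ≤ ‖(1 : ℂ)‖ + ‖l‖ * (‖w‖ / ‖w‖) := by
        simpa [norm_div] using norm_sub_le (1 : ℂ) (l * (conj w / w))
    _ ≤ 1 + 1 * 1 := by
        rw [norm_one, hl]
        gcongr
        exact div_self_le_one _
    _ = 2 := by norm_num

lemma exists_norm_eq_one_re_eq {t : ℝ} (ht : |t| ≤ 1) : ∃ v : ℂ, ‖v‖ = 1 ∧ v.re = t := by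
  obtain ⟨ht₁, ht₂⟩ := abs_le.mp ht
  exact ⟨exp (Real.arccos t * I), norm_exp_ofReal_mul_I _, by
    rw [exp_ofReal_mul_I_re, Real.cos_arccos ht₁ ht₂]⟩

lemma exists_norm_eq_one_mul_one_sub_eq_neg {r : ℝ} (hr : 0 ≤ r) {l : ℂ} (hl : ‖l‖ = 1)
    (hlr : ‖l + 1‖ ≤ 2 * r) : ∃ z : ℂ, ‖z‖ = 1 ∧ l * (1 - r * z) = -(1 - r * conj z) := by
  obtain ⟨a, rfl⟩ := IsAlgClosed.exists_eq_mul_self l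
  have ha : ‖a‖ = 1 := by
    rw [norm_mul] at hl
    nlinarith [norm_nonneg a]
  have haa : a * conj a = 1 := by
    rw [mul_conj, normSq_eq_norm_sq, ha]
    norm_num
  have hre : |a.re| ≤ r := by
    have : a * a + 1 = a * ↑(2 * a.re) := by
      rw [← add_conj]
      linear_combination -haa
    rw [this, norm_mul, ha, one_mul, norm_real, Real.norm_eq_abs, abs_mul] at hlr
    norm_num at hlr
    linarith
  obtain ⟨v, hv, hvre⟩ := exists_norm_eq_one_re_eq (t := a.re / r) <| by
    rw [abs_div, abs_of_nonneg hr]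
    exact div_le_one_of_le₀ hre hr
  -- when `r = 0` both sides vanish: `a.re = 0` and `a.re / 0 = 0`
  have hrv : r * v.re = a.re := by
    rcases hr.eq_or_lt with rfl | hr
    · simpa using (abs_nonpos_iff.mp hre).symm
    · rw [hvre, mul_div_cancel₀ _ hr.ne']
  refine ⟨v * conj a, by rw [norm_mul, norm_conj, hv, ha, one_mul], ?_⟩
  have hrv' : (r : ℂ) * ↑(2 * v.re) = ↑(2 * a.re) := by
    rw [← hrv]
    push_cast
    ring
  rw [map_mul, conj_conj]
  linear_combination (-(1 + r * a * v)) * haa + a * add_conj a - r * a * add_conj v - a * hrv'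

theorem sup_eq_two_of_close (r : ℝ) (hr0 : 0 ≤ r) (hr1 : r < 1)
    (l : ℂ) (hl : ‖l‖ = 1) (hcond : ‖l + 1‖ ≤ 2 * r) :
    (⨆ θ : ℝ, ‖
        (1 - l * ((1 - (r : ℂ) * Complex.exp (Complex.I * θ))
            / (1 - (r : ℂ) * Complex.exp (-(Complex.I * θ)))))‖) = 2 := by
  have hbound : ∀ θ : ℝ, ‖1 - l * ((1 - (r : ℂ) * exp (I * θ))
      / (1 - (r : ℂ) * exp (-(I * θ))))‖ ≤ 2 := fun θ => by
    rw [exp_neg_I_mul_ofReal, ← conj_one_sub_ofReal_mul_conj]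
    exact norm_one_sub_mul_conj_div_self_le_two hl _
  obtain ⟨z, hz, hlz⟩ := exists_norm_eq_one_mul_one_sub_eq_neg hr0 hl hcond
  have hz_exp : exp (I * (arg z : ℝ)) = z := by
    simpa [hz, mul_comm] using norm_mul_exp_arg_mul_I z
  have hden : 1 - (r : ℂ) * conj z ≠ 0 :=
    one_sub_ofReal_mul_ne_zero (abs_lt.mpr ⟨by linarith, hr1⟩) (by rwa [norm_conj])
  have hattain : ‖1 - l * ((1 - (r : ℂ) * exp (I * (arg z : ℝ)))
      / (1 - (r : ℂ) * exp (-(I * (arg z : ℝ)))))‖ = 2 := by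
    rw [exp_neg_I_mul_ofReal, hz_exp, ← mul_div_assoc, hlz, neg_div, div_self hden]
    norm_num
  exact le_antisymm (ciSup_le hbound)
    (hattain ▸ le_ciSup ⟨2, Set.forall_mem_range.mpr hbound⟩ (arg z))
end

section
/- For any u ∈ 𝔻, s ∈ ℝ, and h ∈ ℂ, the limit as Δt → 0⁺ of (1 − λ(Δt))/Δt equals i·(2·Im(ū·h) − s·(1−|u|²))/(1−|u|²), where λ(Δt) = e^{i·s·Δt}·(1 − ū·(u + h·Δt))/(1 − u·conj(u + h·Δt)). -/
open Complex ComplexConjugate Filter Topology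

noncomputable section

/-!
Write `N t = 1 - ū (u + h t)`; the denominator of `λ` is `conj (N t)`, so `λ = e^{i s t} N / N̄`
with `N 0 = 1 - |u|²` real and nonzero. Hence `λ 0 = 1`, and the derivative of `N / N̄` at a
point where `N` is real is `(N' - conj N') / N = 2 i Im N' / N`. The limit is `-λ'(0)`.
-/

theorem HasDerivAt.tendsto_one_sub_div_right {f : ℝ → ℂ} {f' : ℂ} (hf : HasDerivAt f f' 0)
    (hf₀ : f 0 = 1) :
    Tendsto (fun t : ℝ => (1 - f t) / (t : ℂ)) (𝓝[>] 0) (𝓝 (-f')) := by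
  refine hf.tendsto_slope_zero_right.neg.congr fun t => ?_
  simp only [zero_add, hf₀, real_smul, ofReal_inv]
  rw [div_eq_inv_mul, ← mul_neg, neg_sub]

theorem HasDerivAt.div_conj_of_eq_ofReal {N : ℝ → ℂ} {N' : ℂ} {x a : ℝ}
    (hN : HasDerivAt N N' x) (hx : N x = a) (ha : a ≠ 0) :
    HasDerivAt (fun t => N t / conj (N t)) (2 * N'.im / a * I) x := by
  have ha' : (a : ℂ) ≠ 0 := ofReal_ne_zero.mpr ha
  have hconj : conj (N x) = a := by rw [hx, conj_ofReal]
  refine (hN.div hN.star (by rwa [← hconj] at ha')).congr_deriv ?_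
  change (N' * conj (N x) - N x * conj N') / conj (N x) ^ 2 = _
  rw [hconj, hx, mul_comm (a : ℂ), ← sub_mul, sub_conj]
  push_cast
  field_simp

theorem lambda_derivative_limit (u : ℂ) (hu : u ∈ unitDisk) (s : ℝ) (h : ℂ) :
    Filter.Tendsto
      (fun t : ℝ =>
        (1 - Complex.exp (Complex.I * (s * t))
            * ((1 - (starRingEnd ℂ) u * (u + h * t))
                / (1 - u * (starRingEnd ℂ) (u + h * t)))) / (t : ℂ))
      (nhdsWithin 0 (Set.Ioi 0))
      (nhds (Complex.I *
        (((2 * ((starRingEnd ℂ) u * h).im - s * (1 - ‖u‖ ^ 2))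
            / (1 - ‖u‖ ^ 2) : ℝ) : ℂ))) := by
  set a : ℝ := 1 - ‖u‖ ^ 2
  have ha : a ≠ 0 := by
    have : ‖u‖ < 1 := hu
    nlinarith [norm_nonneg u]
  have ha' : (a : ℂ) ≠ 0 := ofReal_ne_zero.mpr ha
  have hN₀ : 1 - conj u * (u + h * ((0 : ℝ) : ℂ)) = a := by
    simp [a, conj_mul']
  have hN : HasDerivAt (fun t : ℝ => 1 - conj u * (u + h * t)) (-(conj u * h)) 0 := by
    simpa using ((((ofRealCLM.hasDerivAt (x := 0)).const_mul h).const_add u).const_mul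
      (conj u)).const_sub 1
  have hexp : HasDerivAt (fun t : ℝ => exp (I * (s * t))) (I * s) 0 := by
    simpa [mul_assoc] using ((ofRealCLM.hasDerivAt (x := 0)).const_mul (I * s)).cexp
  have hlam := hexp.mul (hN.div_conj_of_eq_ofReal hN₀ ha)
  have hlam₀ : exp (I * (s * ((0 : ℝ) : ℂ))) * ((1 - conj u * (u + h * ((0 : ℝ) : ℂ))) /
      conj (1 - conj u * (u + h * ((0 : ℝ) : ℂ)))) = 1 := by
    rw [hN₀, conj_ofReal, div_self ha']
    simp
  convert hlam.tendsto_one_sub_div_right hlam₀ using 3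
  · simp
  · rw [hN₀, conj_ofReal, div_self ha']
    simp only [ofReal_zero, mul_zero, exp_zero, neg_im]
    push_cast
    field_simp
    ring
end
end
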